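/- Let C ∈ {B,W}, t ∈ ℕ, and let v̂, û be nodes of Ĥ_{C,d} with dist(v̂, v̂_C) < 2d − t and dist(û, v̂_C) < 2d − t (where v̂_C = ∅ is the root and dist is graph distance). If v̂ and û are t-SV-bisimilar in (Ĥ_{C,d}, f_C, p_C), then the corresponding nodes v and u are t-SV-bisimilar in (H_{C,d}, f_C, p_C). -/

import Mathlib

namespace Paper

/-- The degree of a vertex: the number of its neighbours. -/
noncomputable def deg {V : Type} (G : SimpleGraph V) (v : V) : ℕ :=
  {u | G.Adj v u}.ncard

/-- A port numbering of a graph, modelled as a partial map sending each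
output port `(v, i)` with `1 ≤ i ≤ deg v` to an input port `(u, j)` of an
adjacent node `u`, bijectively, such that there is a port between `v` and `u`
if and only if they are adjacent. -/
structure IsPortNumbering {V : Type} (G : SimpleGraph V)
    (pn : V → ℕ → Option (V × ℕ)) : Prop where
  dom : ∀ v i, (pn v i).isSome ↔ 1 ≤ i ∧ i ≤ deg G v
  adj : ∀ v i u j, pn v i = some (u, j) → G.Adj v u ∧ 1 ≤ j ∧ j ≤ deg G u
  bij : ∀ u j, 1 ≤ j → j ≤ deg G u → ∃! vi : V × ℕ, pn vi.1 vi.2 = some (u, j)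
  edge : ∀ v u, G.Adj v u ↔ ∃ i j, pn v i = some (u, j)

/-- A generalised port numbering with port numbers from an arbitrary set `N`:
each node `v` has a set of `deg v` output port numbers (those `o` with
`pn v o ≠ none`) and a set of `deg v` input port numbers (those `i` received
from some output port), and `pn` is a bijection from output ports to input
ports of adjacent nodes. -/
structure IsGenPortNumbering {V N : Type} (G : SimpleGraph V)
    (pn : V → N → Option (V × N)) : Prop where
  adj : ∀ v o u i, pn v o = some (u, i) → G.Adj v u
  edge : ∀ v u, G.Adj v u → ∃ o i, pn v o = some (u, i)
  inj : ∀ v o v' o' u i, pn v o = some (u, i) → pn v' o' = some (u, i) →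
    v = v' ∧ o = o'
  out_card : ∀ v, {o | (pn v o).isSome}.ncard = deg G v
  in_card : ∀ u, {i | ∃ v o, pn v o = some (u, i)}.ncard = deg G u

/-- `r`-SV-bisimilarity of `(G, f, v, p)` and `(G', f', v', p')`. -/
def SVBisim {V V' X N : Type} (G : SimpleGraph V) (G' : SimpleGraph V')
    (f : V → X) (f' : V' → X)
    (p : V → N → Option (V × N)) (p' : V' → N → Option (V' × N)) :
    ℕ → V → V' → Prop
  | 0, v, v' => deg G v = deg G' v' ∧ f v = f' v'
  | r + 1, v, v' =>
      (deg G v = deg G' v' ∧ f v = f' v') ∧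
      (∀ w, G.Adj v w → ∃ w', G'.Adj v' w' ∧
        SVBisim G G' f f' p p' r w w' ∧
        ∃ a b c, p w a = some (v, b) ∧ p' w' a = some (v', c)) ∧
      (∀ w', G'.Adj v' w' → ∃ w, G.Adj v w ∧
        SVBisim G G' f f' p p' r w w' ∧
        ∃ a b c, p w a = some (v, b) ∧ p' w' a = some (v', c))

/-- Nodes of the tree `G_d` are finite sequences of pairs of numbers.
We represent a sequence `(a₁, …, a_i)` as the list `[a_i, …, a₁]`, i.e. in
reverse order, so that consing corresponds to appending a pair at the end. -/
abbrev Nd : Type := ℕ × ℕ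

/-- `b₂⁺`: `1` if `b₂ = 0`, and `b₂` otherwise. -/
def bplus (b : ℕ) : ℕ := if b = 0 then 1 else b

/-- For `j ≥ 1`, the `j`-th smallest element of `{lo, lo+1, lo+2, …} \ {f}`.
This realises the greedy choices `c^j = min({lo,…} \ {f, c¹, …, c^{j-1}})`. -/
def nthAvoid (lo f j : ℕ) : ℕ :=
  if lo + j - 1 < f ∨ f < lo then lo + j - 1 else lo + j

/-- The node set `V_d` of the graph `G_d`, given by the rules (G1)–(G4).
(Sequences are represented as reversed lists, the head being the last pair
`a_i` of the sequence.) -/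
inductive Vd (d : ℕ) : List Nd → Prop
  /-- (G1): the empty sequence is a node. -/
  | nil : Vd d []
  /-- (G2): the sequences `((1,0)), ((2,1)), …, ((d,d−1))` are nodes. -/
  | base (k : ℕ) (h1 : 1 ≤ k) (h2 : k ≤ d) : Vd d [(k, k - 1)]
  /-- (G3): children of a node of odd length `< 2d` with last pair `(b₁, b₂)`:
  for `j = 1, …, d−1` append `(c₁ʲ, c₂ʲ)` where `c₁ʲ` is the `j`-th smallest
  element of `{1,…,d} \ {b₂⁺}` and `c₂ʲ` the `j`-th smallest of `{1,…,d} \ {b₁}`. -/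
  | odd (b₁ b₂ : ℕ) (rest : List Nd)
      (hv : Vd d ((b₁, b₂) :: rest))
      (hodd : Odd ((b₁, b₂) :: rest).length)
      (hlt : ((b₁, b₂) :: rest).length < 2 * d)
      (j : ℕ) (hj1 : 1 ≤ j) (hj2 : j ≤ d - 1) :
      Vd d ((nthAvoid 1 (bplus b₂) j, nthAvoid 1 b₁ j) :: (b₁, b₂) :: rest)
  /-- (G4): children of a node of even positive length `< 2d` with last pair
  `(b₁, b₂)`: for `j = 1, …, d−1` append `(c₁ʲ, c₂ʲ)` where `c₁ʲ` is the `j`-th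
  smallest element of `{1,…,d} \ {b₂}` and `c₂ʲ` the `j`-th smallest of
  `{0,…,d−1} \ {b₁}`. -/
  | even (b₁ b₂ : ℕ) (rest : List Nd)
      (hv : Vd d ((b₁, b₂) :: rest))
      (heven : Even ((b₁, b₂) :: rest).length)
      (hlt : ((b₁, b₂) :: rest).length < 2 * d)
      (j : ℕ) (hj1 : 1 ≤ j) (hj2 : j ≤ d - 1) :
      Vd d ((nthAvoid 1 b₂ j, nthAvoid 0 b₁ j) :: (b₁, b₂) :: rest)

/-- The edge relation of `G_d`: `u` is a child of `v` or vice versa. -/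
def Ed (d : ℕ) (v u : List Nd) : Prop :=
  Vd d v ∧ Vd d u ∧ ∃ a : Nd, u = a :: v ∨ v = a :: u

/-- The outgoing port number `π_d(v, u)` from `v` towards an adjacent node `u`:
if `u = (b₁, b₂) :: v` is a child of `v` then `b₁`, and if `v = (b₁, b₂) :: u`
is a child of `u` then `b₂`. -/
def outPort (v u : List Nd) : ℕ :=
  if u.length = v.length + 1 then u.headI.1 else v.headI.2

/-- A pair of compatible walks (PCW) of length `k` in `G_d`:
two walks starting at `((1,0))` and `((2,1))` such that the outgoing port
numbers backwards along the walks coincide. -/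
structure IsPCW (d k : ℕ) (w₁ w₂ : ℕ → List Nd) : Prop where
  klen : k ≤ 2 * d - 3
  walk₁ : ∀ j < k, Ed d (w₁ j) (w₁ (j + 1))
  walk₂ : ∀ j < k, Ed d (w₂ j) (w₂ (j + 1))
  start₁ : w₁ 0 = [(1, 0)]
  start₂ : w₂ 0 = [(2, 1)]
  compat : ∀ j, 1 ≤ j → j ≤ k →
    outPort (w₁ j) (w₁ (j - 1)) = outPort (w₂ j) (w₂ (j - 1))

/-- A pair of separating walks (PSW): a PCW such that the last node of the
first walk has a neighbour whose outgoing port number towards it is matched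
by no neighbour of the last node of the second walk. -/
structure IsPSW (d k : ℕ) (w₁ w₂ : ℕ → List Nd)
    extends IsPCW d k w₁ w₂ : Prop where
  sep : ∃ x, Ed d (w₁ k) x ∧
    ∀ y, Ed d (w₂ k) y → outPort x (w₁ k) ≠ outPort y (w₂ k)

/-- A PSW of length `k` in `G_d` is critical if there is no strictly shorter
PSW in `G_d`. -/
def IsCriticalPSW (d k : ℕ) (w₁ w₂ : ℕ → List Nd) : Prop :=
  IsPSW d k w₁ w₂ ∧ ∀ k' w₁' w₂', IsPSW d k' w₁' w₂' → k ≤ k'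

/-- The three colours: black, white, grey. -/
inductive Col : Type
  | B | W | G
deriving DecidableEq

/-- The complementary colour: `B̄ = W`, `W̄ = B` (grey is left untouched). -/
def Col.flip : Col → Col
  | Col.B => Col.W
  | Col.W => Col.B
  | Col.G => Col.G


/-- Nodes of the trees `H_{C,d}` are finite sequences of triples
(number, number, colour), represented as reversed lists. -/
abbrev Nd3 : Type := ℕ × ℕ × Col

/-- The colouring `f_C`: the root gets grey, any other node the colour
component of its last triple. -/
def fH : List Nd3 → Col
  | [] => Col.G
  | (_, _, c) :: _ => c

/-- The node set `V_{C,d}` of the graph `H_{C,d}`, given by rules (H1)–(H6). -/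
inductive VH (C : Col) (d : ℕ) : List Nd3 → Prop
  /-- (H1): the empty sequence is a node. -/
  | nil : VH C d []
  /-- (H2): the sequences `((1,0,C)), ((2,1,C)), …, ((d,d−1,C))`. -/
  | base (k : ℕ) (h1 : 1 ≤ k) (h2 : k ≤ d) : VH C d [(k, k - 1, C)]
  /-- (H3): the sequences `((2,1,C̄)), …, ((d,d−1,C̄))`. -/
  | base' (k : ℕ) (h1 : 2 ≤ k) (h2 : k ≤ d) : VH C d [(k, k - 1, Col.flip C)]
  /-- (H4): grey children of a node of odd length `< 2d` with last triple
  `(b₁, b₂, c)`, `c ∈ {B, W}`. -/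
  | odd (b₁ b₂ : ℕ) (c : Col) (rest : List Nd3)
      (hc : c ≠ Col.G)
      (hv : VH C d ((b₁, b₂, c) :: rest))
      (hodd : Odd ((b₁, b₂, c) :: rest).length)
      (hlt : ((b₁, b₂, c) :: rest).length < 2 * d)
      (j : ℕ) (hj1 : 1 ≤ j) (hj2 : j ≤ d - 1) :
      VH C d ((nthAvoid 1 (bplus b₂) j, nthAvoid 1 b₁ j, Col.G) ::
        (b₁, b₂, c) :: rest)
  /-- (H5): children of colour `c` of a grey node of even positive length
  `< 2d` with last triple `(b₁, b₂, G)` and previous triple `(d₁, d₂, c)`,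
  `c ∈ {B, W}`. -/
  | evenSame (b₁ b₂ d₁ d₂ : ℕ) (c : Col) (rest : List Nd3)
      (hc : c ≠ Col.G)
      (hv : VH C d ((b₁, b₂, Col.G) :: (d₁, d₂, c) :: rest))
      (heven : Even ((b₁, b₂, Col.G) :: (d₁, d₂, c) :: rest).length)
      (hlt : ((b₁, b₂, Col.G) :: (d₁, d₂, c) :: rest).length < 2 * d)
      (j : ℕ) (hj1 : 1 ≤ j) (hj2 : j ≤ d - 1) :
      VH C d ((nthAvoid 1 b₂ j, nthAvoid 0 b₁ j, c) ::
        (b₁, b₂, Col.G) :: (d₁, d₂, c) :: rest)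
  /-- (H6): children of colour `c̄` of a grey node of even positive length
  `< 2d` with previous triple `(d₁, d₂, c)`, `c ∈ {B, W}`; here
  `c₁ʲ = min({2,…,d} \ {c₁¹,…}) = j + 1` and `c₂ʲ = min({1,…,d−1} \ {c₂¹,…}) = j`. -/
  | evenFlip (b₁ b₂ d₁ d₂ : ℕ) (c : Col) (rest : List Nd3)
      (hc : c ≠ Col.G)
      (hv : VH C d ((b₁, b₂, Col.G) :: (d₁, d₂, c) :: rest))
      (heven : Even ((b₁, b₂, Col.G) :: (d₁, d₂, c) :: rest).length)
      (hlt : ((b₁, b₂, Col.G) :: (d₁, d₂, c) :: rest).length < 2 * d)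
      (j : ℕ) (hj1 : 1 ≤ j) (hj2 : j ≤ d - 1) :
      VH C d ((j + 1, j, Col.flip c) ::
        (b₁, b₂, Col.G) :: (d₁, d₂, c) :: rest)

/-- The edge relation of `H_{C,d}`. -/
def EH (C : Col) (d : ℕ) (v u : List Nd3) : Prop :=
  VH C d v ∧ VH C d u ∧ ∃ a : Nd3, u = a :: v ∨ v = a :: u

/-- The graph `H_{C,d}` as a simple graph on all lists of triples. -/
def HGraph (C : Col) (d : ℕ) : SimpleGraph (List Nd3) where
  Adj v u := EH C d v u
  symm := by
    constructor
    rintro v u ⟨hv, hu, a, h⟩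
    exact ⟨hu, hv, a, h.symm⟩
  loopless := by
    constructor
    rintro v ⟨-, -, a, h | h⟩ <;>
      exact absurd (congrArg List.length h) (by simp)

/-- Membership in the induced subgraph `Ĥ_{C,d}`: every prefix of the
sequence (i.e. every suffix of the reversed list) is grey or of colour `C`. -/
def inHat (C : Col) (v : List Nd3) : Prop :=
  ∀ s : List Nd3, s <:+ v → (fH s = C ∨ fH s = Col.G)

/-- The induced subgraph `Ĥ_{C,d}` of `H_{C,d}`. -/
def HhatGraph (C : Col) (d : ℕ) : SimpleGraph (List Nd3) where
  Adj v u := EH C d v u ∧ inHat C v ∧ inHat C u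
  symm := by
    constructor
    rintro v u ⟨⟨hv, hu, a, h⟩, h1, h2⟩
    exact ⟨⟨hu, hv, a, h.symm⟩, h2, h1⟩
  loopless := by
    constructor
    rintro v ⟨⟨-, -, a, h | h⟩, -, -⟩ <;>
      exact absurd (congrArg List.length h) (by simp)

open Classical in
/-- The generalised port numbering `p_C` of `H_{C,d}`, with port numbers that
are pairs (number, colour): along the edge between a node and its child, each
of the two outgoing port labels consists of the corresponding number of the
child's last triple together with the colour of the node at the other end. -/
noncomputable def pH (C : Col) (d : ℕ) (v : List Nd3) (q : ℕ × Col) :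
    Option (List Nd3 × (ℕ × Col)) :=
  if h : ∃ c₂ : ℕ, VH C d ((q.1, c₂, q.2) :: v) then
    some ((q.1, h.choose, q.2) :: v, (h.choose, fH v))
  else
    match v with
    | (b₁, b₂, cv) :: w =>
        if q = (b₂, fH w) ∧ VH C d ((b₁, b₂, cv) :: w) then
          some (w, (b₁, cv))
        else none
    | [] => none

open Classical in
/-- The restriction of the generalised port numbering `p_C` to the induced
subgraph `Ĥ_{C,d}`. -/
noncomputable def pHhat (C : Col) (d : ℕ) (v : List Nd3) (q : ℕ × Col) :
    Option (List Nd3 × (ℕ × Col)) :=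
  match pH C d v q with
  | some (u, a) => if inHat C v ∧ inHat C u then some (u, a) else none
  | none => none

/-- The isomorphism `g_C` from `Ĥ_{C,d}` to `G_d`: forget the colours. -/
def gC (v : List Nd3) : List Nd := v.map (fun t => (t.1, t.2.1))

/-!
`H_{C,d}` arises from `Ĥ_{C,d}` by giving every grey node its flip-coloured children
`(j+1, j, C̄)`, `1 ≤ j < d`, together with the subtrees below them. These children do not depend
on the grey node, so the `H`-degree of a node of `Ĥ` is its `Ĥ`-degree plus a number determined
by its colour. Moreover the children of any node depend only on its last triple and, if that one
is grey, on the one before it. Hence appending the same triples, the first of them not grey, to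
two `t`-bisimilar nodes of `Ĥ` yields nodes whose `H`-neighbourhoods correspond port by port,
corresponding neighbours being again a pair of this kind one level lower. So these pairs form a
depth-bounded bisimulation of `H`, as long as all nodes involved stay below depth `2d`; the
distance bound guarantees this, depth being at most the distance to the root.
-/

section SVBisim

variable {V V' X N : Type} {G : SimpleGraph V} {G' : SimpleGraph V'} {f : V → X}
  {f' : V' → X} {p : V → N → Option (V × N)} {p' : V' → N → Option (V' × N)}

theorem SVBisim.deg_eq_and_eq :
    ∀ {r v v'}, SVBisim G G' f f' p p' r v v' → deg G v = deg G' v' ∧ f v = f' v'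
  | 0, _, _, h => h
  | _ + 1, _, _, h => h.1

theorem SVBisim.of_succ :
    ∀ {r v v'}, SVBisim G G' f f' p p' (r + 1) v v' → SVBisim G G' f f' p p' r v v'
  | 0, _, _, h => h.1
  | _ + 1, _, _, ⟨h, hfwd, hbwd⟩ =>
      ⟨h, fun w hw => (hfwd w hw).imp fun _ ⟨hw', hb, hp⟩ => ⟨hw', hb.of_succ, hp⟩,
        fun w' hw' => (hbwd w' hw').imp fun _ ⟨hw, hb, hp⟩ => ⟨hw, hb.of_succ, hp⟩⟩

theorem SVBisim.symm :
    ∀ {r v v'}, SVBisim G G' f f' p p' r v v' → SVBisim G' G f' f p' p r v' v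
  | 0, _, _, ⟨hdeg, hf⟩ => ⟨hdeg.symm, hf.symm⟩
  | _ + 1, _, _, ⟨⟨hdeg, hf⟩, hfwd, hbwd⟩ =>
      ⟨⟨hdeg.symm, hf.symm⟩,
        fun w' hw' => by
          obtain ⟨w, hw, hb, a, b, c, hpw, hpw'⟩ := hbwd w' hw'
          exact ⟨w, hw, hb.symm, a, c, b, hpw', hpw⟩,
        fun w hw => by
          obtain ⟨w', hw', hb, a, b, c, hpw, hpw'⟩ := hfwd w hw
          exact ⟨w', hw', hb.symm, a, c, b, hpw', hpw⟩⟩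

theorem SVBisim.of_relation (R : ℕ → V → V → Prop) (hsymm : ∀ {r x y}, R r x y → R r y x)
    (hbase : ∀ {r x y}, R r x y → deg G x = deg G y ∧ f x = f y)
    (hstep : ∀ {r x y}, R (r + 1) x y → ∀ w, G.Adj x w → ∃ w', G.Adj y w' ∧ R r w w' ∧
      ∃ a b c, p w a = some (x, b) ∧ p w' a = some (y, c)) :
    ∀ {r x y}, R r x y → SVBisim G G f f p p r x y
  | 0, _, _, h => hbase h
  | _ + 1, _, _, h =>
      ⟨hbase h,
        fun w hw => by
          obtain ⟨w', hw', hR, hp⟩ := hstep h w hw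
          exact ⟨w', hw', SVBisim.of_relation R hsymm hbase hstep hR, hp⟩,
        fun w' hw' => by
          obtain ⟨w, hw, hR, a, b, c, hpw', hpw⟩ := hstep (hsymm h) w' hw'
          exact ⟨w, hw, SVBisim.of_relation R hsymm hbase hstep (hsymm hR), a, c, b, hpw, hpw'⟩⟩

end SVBisim

theorem _root_.SimpleGraph.Walk.le_length_add {V : Type} {G : SimpleGraph V} (f : V → ℕ)
    (hf : ∀ x y, G.Adj x y → f x ≤ f y + 1) {v w : V} (q : G.Walk v w) :
    f v ≤ q.length + f w := by
  induction q with
  | nil => simp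
  | cons h _ ih => have := hf _ _ h; rw [SimpleGraph.Walk.length_cons]; omega

namespace Col

theorem flip_ne {C : Col} (hC : C ≠ G) : C.flip ≠ C := by
  cases C <;> simp_all [flip]

theorem flip_ne_G {C : Col} (hC : C ≠ G) : C.flip ≠ G := by
  cases C <;> simp_all [flip]

theorem eq_or_eq_G_or_eq_flip {C : Col} (hC : C ≠ G) (c : Col) :
    c = C ∨ c = G ∨ c = C.flip := by
  cases C <;> cases c <;> simp_all [flip]

instance : Fintype Col := ⟨{B, W, G}, by intro c; cases c <;> simp⟩

end Col

theorem nthAvoid_ne {lo f j : ℕ} (hj : 1 ≤ j) : nthAvoid lo f j ≠ f := by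
  unfold nthAvoid; split_ifs <;> omega

theorem nthAvoid_injective {lo f j j' : ℕ} (hj : 1 ≤ j) (hj' : 1 ≤ j')
    (h : nthAvoid lo f j = nthAvoid lo f j') : j = j' := by
  unfold nthAvoid at h; split_ifs at h <;> omega

theorem nthAvoid_le (lo f j : ℕ) : nthAvoid lo f j ≤ lo + j := by
  unfold nthAvoid; split_ifs <;> omega

theorem nthAvoid_one_bplus_ne {b j : ℕ} (hj : 1 ≤ j) : nthAvoid 1 (bplus b) j ≠ b := by
  unfold nthAvoid bplus; split_ifs <;> omega

@[simp]
theorem fH_cons (a : Nd3) (v : List Nd3) : fH (a :: v) = a.2.2 := rfl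

section Tree

variable {C : Col} {d : ℕ}

theorem VH.cons_inv {a : Nd3} {v : List Nd3} (h : VH C d (a :: v)) :
    (v = [] ∧ ∃ k, 1 ≤ k ∧ k ≤ d ∧
        (a = (k, k - 1, C) ∨ (2 ≤ k ∧ a = (k, k - 1, C.flip)))) ∨
    (∃ b₁ b₂ c rest, v = (b₁, b₂, c) :: rest ∧ c ≠ Col.G ∧
        Odd v.length ∧ v.length < 2 * d ∧ VH C d v ∧
        ∃ j, 1 ≤ j ∧ j ≤ d - 1 ∧
          a = (nthAvoid 1 (bplus b₂) j, nthAvoid 1 b₁ j, Col.G)) ∨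
    (∃ b₁ b₂ d₁ d₂ c rest, v = (b₁, b₂, Col.G) :: (d₁, d₂, c) :: rest ∧
        c ≠ Col.G ∧ Even v.length ∧ v.length < 2 * d ∧ VH C d v ∧
        ∃ j, 1 ≤ j ∧ j ≤ d - 1 ∧
          (a = (nthAvoid 1 b₂ j, nthAvoid 0 b₁ j, c) ∨ a = (j + 1, j, c.flip))) := by
  cases h with
  | base k h1 h2 => exact .inl ⟨rfl, k, h1, h2, .inl rfl⟩
  | base' k h1 h2 => exact .inl ⟨rfl, k, by omega, h2, .inr ⟨h1, rfl⟩⟩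
  | odd b₁ b₂ c rest hc hv hodd hlt j hj1 hj2 =>
      exact .inr (.inl ⟨b₁, b₂, c, rest, rfl, hc, hodd, hlt, hv, j, hj1, hj2, rfl⟩)
  | evenSame b₁ b₂ d₁ d₂ c rest hc hv he hlt j hj1 hj2 =>
      exact .inr (.inr ⟨b₁, b₂, d₁, d₂, c, rest, rfl, hc, he, hlt, hv, j, hj1, hj2, .inl rfl⟩)
  | evenFlip b₁ b₂ d₁ d₂ c rest hc hv he hlt j hj1 hj2 =>
      exact .inr (.inr ⟨b₁, b₂, d₁, d₂, c, rest, rfl, hc, he, hlt, hv, j, hj1, hj2, .inr rfl⟩)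

theorem VH.of_cons {a : Nd3} {v : List Nd3} (h : VH C d (a :: v)) : VH C d v := by
  cases h <;> first | exact .nil | assumption

theorem VH.fst_le_and_snd_le {a : Nd3} {v : List Nd3} (h : VH C d (a :: v)) :
    a.1 ≤ d ∧ a.2.1 ≤ d := by
  cases h with
  | base k _ _ | base' k _ _ => dsimp only; omega
  | odd b₁ b₂ _ _ _ _ _ _ j _ _ =>
      have := nthAvoid_le 1 (bplus b₂) j; have := nthAvoid_le 1 b₁ j
      dsimp only; omega
  | evenSame b₁ b₂ _ _ _ _ _ _ _ _ j _ _ =>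
      have := nthAvoid_le 1 b₂ j; have := nthAvoid_le 0 b₁ j
      dsimp only; omega
  | evenFlip => dsimp only; omega

theorem VH.fH_eq_G_iff_even (hC : C ≠ Col.G) {v : List Nd3} (h : VH C d v) :
    fH v = Col.G ↔ Even v.length := by
  induction h with
  | nil => simp [fH]
  | base => simpa using hC
  | base' => simpa using Col.flip_ne_G hC
  | odd _ _ _ _ _ _ hodd =>
      simpa [Nat.even_add_one, Nat.odd_add_one] using hodd
  | evenSame _ _ _ _ _ _ hc _ he =>
      simpa [Nat.even_add_one, hc] using he
  | evenFlip _ _ _ _ _ _ hc _ he =>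
      simpa [Nat.even_add_one, Col.flip_ne_G hc] using he

theorem VH.eq_cons_cons_of_fH_eq_G (hC : C ≠ Col.G) {v : List Nd3} (h : VH C d v)
    (hg : fH v = Col.G) (hne : v ≠ []) :
    ∃ b₁ b₂ d₁ d₂ c rest, v = (b₁, b₂, Col.G) :: (d₁, d₂, c) :: rest ∧ c ≠ Col.G := by
  cases h with
  | nil => exact absurd rfl hne
  | base => exact absurd hg (by simpa using hC)
  | base' => exact absurd hg (by simpa using Col.flip_ne_G hC)
  | odd b₁ b₂ c rest hc => exact ⟨_, _, b₁, b₂, c, rest, rfl, hc⟩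
  | evenSame _ _ _ _ _ _ hc => exact absurd hg (by simpa using hc)
  | evenFlip _ _ _ _ _ _ hc => exact absurd hg (by simpa using Col.flip_ne_G hc)

theorem VH.snd_unique {q₁ c₂ c₂' : ℕ} {qc : Col} {v : List Nd3}
    (h : VH C d ((q₁, c₂, qc) :: v)) (h' : VH C d ((q₁, c₂', qc) :: v)) : c₂ = c₂' := by
  rcases h.cons_inv with ⟨rfl, k, -, -, hk⟩ |
      ⟨b₁, b₂, c, rest, rfl, hc, -, -, -, j, hj, -, hk⟩ |
      ⟨b₁, b₂, d₁, d₂, c, rest, rfl, hc, -, -, -, j, hj, -, hk⟩ <;>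
    rcases h'.cons_inv with ⟨hv, k', -, -, hk'⟩ |
      ⟨b₁', b₂', c', rest', hv, hc', -, -, -, j', hj', -, hk'⟩ |
      ⟨b₁', b₂', d₁', d₂', c', rest', hv, hc', -, -, -, j', hj', -, hk'⟩ <;>
    grind [nthAvoid_injective, Col.flip_ne]

/-- The port `(x₂, fH v)` of `(x₁, x₂, γ) :: v` leads to the parent, never to a child. -/
theorem VH.not_cons_cons_snd {x₁ x₂ c₂ : ℕ} {γ : Col} {v : List Nd3} :
    ¬ VH C d ((x₂, c₂, fH v) :: (x₁, x₂, γ) :: v) := by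
  intro h
  rcases h.cons_inv with ⟨hv, -⟩ |
      ⟨b₁, b₂, c, rest, hv, hc, -, -, -, j, hj, -, hk⟩ |
      ⟨b₁, b₂, d₁, d₂, c, rest, hv, hc, -, -, -, j, hj, -, hk⟩ <;>
    grind [nthAvoid_ne, nthAvoid_one_bplus_ne, Col.flip_ne, fH_cons]

theorem pH_cons_snd {x₁ x₂ : ℕ} {γ : Col} {v : List Nd3} (h : VH C d ((x₁, x₂, γ) :: v)) :
    pH C d ((x₁, x₂, γ) :: v) (x₂, fH v) = some (v, (x₁, γ)) := by
  rw [pH, dif_neg fun ⟨_, hc⟩ => VH.not_cons_cons_snd hc]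
  simp [h]

theorem pH_fst {x₁ x₂ : ℕ} {γ : Col} {v : List Nd3} (h : VH C d ((x₁, x₂, γ) :: v)) :
    pH C d v (x₁, γ) = some ((x₁, x₂, γ) :: v, (x₂, fH v)) := by
  have hex : ∃ c₂, VH C d ((x₁, c₂, γ) :: v) := ⟨x₂, h⟩
  rw [pH, dif_pos hex, VH.snd_unique hex.choose_spec h]

theorem pH_of_pHhat {v u : List Nd3} {q a : ℕ × Col} (h : pHhat C d v q = some (u, a)) :
    pH C d v q = some (u, a) := by
  unfold pHhat at h
  split at h
  · split_ifs at h; simp_all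
  · simp at h

theorem inHat_cons {a : Nd3} {v : List Nd3} :
    inHat C (a :: v) ↔ (a.2.2 = C ∨ a.2.2 = Col.G) ∧ inHat C v := by
  refine ⟨fun h => ⟨by simpa using h _ List.suffix_rfl,
    fun s hs => h s (hs.trans (List.suffix_cons a v))⟩, fun ⟨ha, hv⟩ s hs => ?_⟩
  rcases List.suffix_cons_iff.mp hs with rfl | hs
  · simpa using ha
  · exact hv s hs

theorem inHat.snd_eq {x y : Nd3} {rest : List Nd3} (h : inHat C (x :: y :: rest))
    (hy : y.2.2 ≠ Col.G) : y.2.2 = C :=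
  (inHat_cons.mp (inHat_cons.mp h).2).1.resolve_right hy

theorem inHat.eq_flip_of_not_inHat_cons (hC : C ≠ Col.G) {b : Nd3} {v : List Nd3}
    (hv : inHat C v) (hb : ¬ inHat C (b :: v)) : b.2.2 = C.flip := by
  rcases Col.eq_or_eq_G_or_eq_flip hC b.2.2 with h | h | h
  exacts [absurd (inHat_cons.mpr ⟨.inl h, hv⟩) hb, absurd (inHat_cons.mpr ⟨.inr h, hv⟩) hb, h]

theorem VH_cons_and_eq_flip_iff (hC : C ≠ Col.G) {v : List Nd3} (hv : VH C d v)
    (hhat : inHat C v) (hlen : v.length < 2 * d) (a : Nd3) :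
    (VH C d (a :: v) ∧ a.2.2 = C.flip) ↔
      fH v = Col.G ∧ ∃ j, 1 ≤ j ∧ j ≤ d - 1 ∧ a = (j + 1, j, C.flip) := by
  constructor
  · rintro ⟨h, hcol⟩
    rcases h.cons_inv with ⟨rfl, k, -, hk, rfl | ⟨hk', rfl⟩⟩ |
        ⟨_, _, _, _, -, -, -, -, -, _, -, -, rfl⟩ |
        ⟨b₁, b₂, d₁, d₂, c, rest, rfl, hc, -, -, -, j, hj, hj', rfl | rfl⟩
    · exact absurd hcol (Col.flip_ne hC).symm
    · exact ⟨rfl, k - 1, by omega, by omega, by simp; omega⟩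
    · exact absurd hcol (Col.flip_ne_G hC).symm
    all_goals obtain rfl : c = C := hhat.snd_eq hc
    · exact absurd hcol (Col.flip_ne hC).symm
    · exact ⟨rfl, j, hj, hj', rfl⟩
  · rintro ⟨hg, j, hj, hj', rfl⟩
    refine ⟨?_, rfl⟩
    by_cases hne : v = []
    · subst hne
      simpa using VH.base' (C := C) (j + 1) (by omega) (by omega)
    · obtain ⟨b₁, b₂, d₁, d₂, c, rest, rfl, hc⟩ := hv.eq_cons_cons_of_fH_eq_G hC hg hne
      obtain rfl : c = C := hhat.snd_eq hc
      exact .evenFlip b₁ b₂ d₁ d₂ c rest hc hv ((hv.fH_eq_G_iff_even hC).mp hg) hlen j hj hj'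

theorem VH_cons_and_eq_flip_congr (hC : C ≠ Col.G) {v u : List Nd3} (hv : VH C d v)
    (hu : VH C d u) (hvhat : inHat C v) (huhat : inHat C u) (hlv : v.length < 2 * d)
    (hlu : u.length < 2 * d) (hf : fH v = fH u) (a : Nd3) :
    (VH C d (a :: v) ∧ a.2.2 = C.flip) ↔ (VH C d (a :: u) ∧ a.2.2 = C.flip) := by
  rw [VH_cons_and_eq_flip_iff hC hv hvhat hlv, VH_cons_and_eq_flip_iff hC hu huhat hlu, hf]

theorem EH.length_le {v w : List Nd3} (h : EH C d v w) : w.length ≤ v.length + 1 := by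
  obtain ⟨-, -, a, rfl | rfl⟩ := h <;> simp only [List.length_cons] <;> omega

theorem finite_setOf_VH_cons (v : List Nd3) : {a : Nd3 | VH C d (a :: v)}.Finite :=
  ((Set.finite_Iic d).prod ((Set.finite_Iic d).prod Set.finite_univ)).subset
    fun _ ha => ⟨ha.fst_le_and_snd_le.1, ha.fst_le_and_snd_le.2, trivial⟩

theorem finite_neighborSet_HGraph (v : List Nd3) : ((HGraph C d).neighborSet v).Finite := by
  refine (((finite_setOf_VH_cons (C := C) (d := d) v).image (· :: v)).insert v.tail).subset ?_
  rintro w ⟨-, hw, a, rfl | rfl⟩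
  · exact .inr ⟨a, hw, rfl⟩
  · exact .inl rfl

theorem deg_eq_ncard_neighborSet {V : Type} (G : SimpleGraph V) (v : V) :
    deg G v = (G.neighborSet v).ncard := rfl

theorem deg_HGraph_cons {a : Nd3} {x : List Nd3} (h : VH C d (a :: x)) :
    deg (HGraph C d) (a :: x) = {b : Nd3 | VH C d (b :: a :: x)}.ncard + 1 := by
  have hnbhd : (HGraph C d).neighborSet (a :: x) =
      insert x ((· :: a :: x) '' {b : Nd3 | VH C d (b :: a :: x)}) := by
    ext w
    constructor
    · rintro ⟨-, hw, b, rfl | h⟩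
      · exact .inr ⟨b, hw, rfl⟩
      · exact .inl (List.cons.inj h).2.symm
    · rintro (rfl | ⟨b, hb, rfl⟩)
      · exact ⟨h, h.of_cons, a, .inr rfl⟩
      · exact ⟨h, hb, b, .inl rfl⟩
  have hx : x ∉ (· :: a :: x) '' {b : Nd3 | VH C d (b :: a :: x)} := by
    rintro ⟨b, -, hb⟩
    have := congrArg List.length hb
    simp only [List.length_cons] at this
    omega
  rw [deg_eq_ncard_neighborSet, hnbhd,
    Set.ncard_insert_of_notMem hx ((finite_setOf_VH_cons _).image _),
    Set.ncard_image_of_injective _ fun _ _ h => (List.cons.inj h).1]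

theorem deg_HGraph_eq_deg_HhatGraph_add (hC : C ≠ Col.G) {v : List Nd3} (hhat : inHat C v) :
    deg (HGraph C d) v =
      deg (HhatGraph C d) v + {a : Nd3 | VH C d (a :: v) ∧ a.2.2 = C.flip}.ncard := by
  have hunion : (HGraph C d).neighborSet v = (HhatGraph C d).neighborSet v ∪
      (· :: v) '' {a : Nd3 | VH C d (a :: v) ∧ a.2.2 = C.flip} := by
    ext w
    constructor
    · rintro hw
      by_cases hw_hat : inHat C w
      · exact .inl ⟨hw, hhat, hw_hat⟩
      · obtain ⟨-, hwV, a, rfl | rfl⟩ := hw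
        · exact .inr ⟨a, ⟨hwV, hhat.eq_flip_of_not_inHat_cons hC hw_hat⟩, rfl⟩
        · exact absurd (inHat_cons.mp hhat).2 hw_hat
    · rintro (hw | ⟨a, ⟨ha, -⟩, rfl⟩)
      · exact hw.1
      · exact ⟨ha.of_cons, ha, a, .inl rfl⟩
  have hdisj : Disjoint ((HhatGraph C d).neighborSet v)
      ((· :: v) '' {a : Nd3 | VH C d (a :: v) ∧ a.2.2 = C.flip}) := by
    rw [Set.disjoint_right]
    rintro _ ⟨a, ⟨-, ha⟩, rfl⟩ ⟨-, -, hw_hat⟩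
    rcases (inHat_cons.mp hw_hat).1 with h | h
    · exact Col.flip_ne hC (ha.symm.trans h)
    · exact Col.flip_ne_G hC (ha.symm.trans h)
  have hfin := finite_neighborSet_HGraph (C := C) (d := d) v
  rw [deg_eq_ncard_neighborSet, deg_eq_ncard_neighborSet, hunion,
    Set.ncard_union_eq hdisj (hfin.subset (hunion ▸ Set.subset_union_left))
      (hfin.subset (hunion ▸ Set.subset_union_right)),
    Set.ncard_image_of_injective _ fun _ _ h => (List.cons.inj h).1]

/-- The children of a node depend only on its last triple and, if that one is grey, on the
triple before it. -/
theorem VH.cons_append_of_cons_append (hC : C ≠ Col.G) {a : Nd3} {pre v u : List Nd3}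
    (hne : pre ≠ []) (hlast : ∀ x ∈ pre.getLast?, x.2.2 ≠ Col.G) (hu : VH C d (pre ++ u))
    (hlen : (pre ++ u).length < 2 * d) (h : VH C d (a :: (pre ++ v))) :
    VH C d (a :: (pre ++ u)) := by
  obtain ⟨p, pr, rfl⟩ := List.exists_cons_of_ne_nil hne
  simp only [List.cons_append] at h hu hlen ⊢
  rcases h.cons_inv with ⟨hv, -⟩ | ⟨b₁, b₂, c, rest, hv, hc, -, -, -, j, hj, hj', rfl⟩ |
      ⟨b₁, b₂, d₁, d₂, c, rest, hv, hc, -, -, -, j, hj, hj', rfl | rfl⟩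
  · simp at hv
  · obtain ⟨rfl, -⟩ := List.cons.inj hv
    have hodd : Odd ((b₁, b₂, c) :: (pr ++ u)).length :=
      Nat.not_even_iff_odd.mp fun he => hc ((hu.fH_eq_G_iff_even hC).mpr he)
    exact .odd b₁ b₂ c _ hc hu hodd hlen j hj hj'
  all_goals
    obtain ⟨rfl, htail⟩ := List.cons.inj hv
    obtain _ | ⟨q, qr⟩ := pr
    · exact absurd rfl (hlast (b₁, b₂, Col.G) (by simp))
    obtain ⟨rfl, -⟩ := List.cons.inj htail
    have he := (hu.fH_eq_G_iff_even hC).mp rfl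
  · exact .evenSame b₁ b₂ d₁ d₂ c _ hc hu he hlen j hj hj'
  · exact .evenFlip b₁ b₂ d₁ d₂ c _ hc hu he hlen j hj hj'

theorem pH_matching_port_to_parent {b : Nd3} {x y : List Nd3} (hx : VH C d (b :: x))
    (hy : VH C d (b :: y)) (hf : fH x = fH y) :
    ∃ a c c', pH C d (b :: x) a = some (x, c) ∧ pH C d (b :: y) a = some (y, c') := by
  obtain ⟨b₁, b₂, γ⟩ := b
  exact ⟨(b₂, fH x), (b₁, γ), (b₁, γ), pH_cons_snd hx, hf ▸ pH_cons_snd hy⟩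

theorem pH_matching_port_to_child {b : Nd3} {x y : List Nd3} (hx : VH C d (b :: x))
    (hy : VH C d (b :: y)) :
    ∃ a c c', pH C d x a = some (b :: x, c) ∧ pH C d y a = some (b :: y, c') := by
  obtain ⟨b₁, b₂, γ⟩ := b
  exact ⟨(b₁, γ), (b₂, fH x), (b₂, fH y), pH_fst hx, pH_fst hy⟩

/-- `x = pre ++ v` and `y = pre ++ u` hang the same triples below `t`-bisimilar nodes `v`, `u`
of `Ĥ`, the first appended triple not being grey. -/
def ExtBisim (C : Col) (d t : ℕ) (x y : List Nd3) : Prop :=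
  ∃ pre v u, x = pre ++ v ∧ y = pre ++ u ∧ VH C d x ∧ VH C d y ∧ inHat C v ∧ inHat C u ∧
    x.length + t < 2 * d ∧ y.length + t < 2 * d ∧ (∀ a ∈ pre.getLast?, a.2.2 ≠ Col.G) ∧
    SVBisim (HhatGraph C d) (HhatGraph C d) fH fH (pHhat C d) (pHhat C d) t v u

theorem ExtBisim.symm {t : ℕ} {x y : List Nd3} (h : ExtBisim C d t x y) : ExtBisim C d t y x :=
  let ⟨pre, v, u, hx, hy, hxV, hyV, hv, hu, hlx, hly, hlast, hbis⟩ := h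
  ⟨pre, u, v, hy, hx, hyV, hxV, hu, hv, hly, hlx, hlast, hbis.symm⟩

theorem ExtBisim.deg_eq_and_fH_eq (hC : C ≠ Col.G) {t : ℕ} {x y : List Nd3}
    (h : ExtBisim C d t x y) : deg (HGraph C d) x = deg (HGraph C d) y ∧ fH x = fH y := by
  obtain ⟨pre, v, u, rfl, rfl, hx, hy, hv, hu, hlx, hly, hlast, hbis⟩ := h
  rcases pre with _ | ⟨p, pr⟩
  · simp only [List.nil_append] at hx hy hlx hly ⊢
    obtain ⟨hdeg, hf⟩ := hbis.deg_eq_and_eq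
    have hflip : {a : Nd3 | VH C d (a :: v) ∧ a.2.2 = C.flip} =
        {a : Nd3 | VH C d (a :: u) ∧ a.2.2 = C.flip} :=
      Set.ext (VH_cons_and_eq_flip_congr hC hx hy hv hu (by omega) (by omega) hf)
    rw [deg_HGraph_eq_deg_HhatGraph_add hC hv, deg_HGraph_eq_deg_HhatGraph_add hC hu, hdeg,
      hflip]
    exact ⟨rfl, hf⟩
  · refine ⟨?_, rfl⟩
    have hchildren : {a : Nd3 | VH C d (a :: p :: (pr ++ v))} =
        {a : Nd3 | VH C d (a :: p :: (pr ++ u))} := by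
      ext a
      exact ⟨VH.cons_append_of_cons_append hC (List.cons_ne_nil _ _) hlast hy (by omega),
        VH.cons_append_of_cons_append hC (List.cons_ne_nil _ _) hlast hx (by omega)⟩
    rw [List.cons_append] at hx hy ⊢
    rw [List.cons_append, deg_HGraph_cons hx, deg_HGraph_cons hy, hchildren]

theorem ExtBisim.exists_adj_of_nil (hC : C ≠ Col.G) {t : ℕ} {v u : List Nd3}
    (hv : VH C d v) (hu : VH C d u) (hvhat : inHat C v) (huhat : inHat C u)
    (hlv : v.length + (t + 1) < 2 * d) (hlu : u.length + (t + 1) < 2 * d)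
    (hbis : SVBisim (HhatGraph C d) (HhatGraph C d) fH fH (pHhat C d) (pHhat C d) (t + 1) v u)
    (w : List Nd3) (hw : (HGraph C d).Adj v w) :
    ∃ w', (HGraph C d).Adj u w' ∧ ExtBisim C d t w w' ∧
      ∃ a b c, pH C d w a = some (v, b) ∧ pH C d w' a = some (u, c) := by
  by_cases hw_hat : inHat C w
  · obtain ⟨w', hw', hbis', a, b, c, hpw, hpw'⟩ := hbis.2.1 w ⟨hw, hvhat, hw_hat⟩
    have hlw := EH.length_le hw
    have hlw' := EH.length_le hw'.1
    exact ⟨w', hw'.1, ⟨[], w, w', rfl, rfl, hw.2.1, hw'.1.2.1, hw_hat, hw'.2.2, by omega,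
      by omega, by simp, hbis'⟩, a, b, c, pH_of_pHhat hpw, pH_of_pHhat hpw'⟩
  obtain ⟨-, hbv, b, rfl | rfl⟩ := hw
  · have hb := hvhat.eq_flip_of_not_inHat_cons hC hw_hat
    have hf := hbis.deg_eq_and_eq.2
    have hbu : VH C d (b :: u) :=
      ((VH_cons_and_eq_flip_congr hC hv hu hvhat huhat (by omega) (by omega) hf b).mp
        ⟨hbv, hb⟩).1
    refine ⟨b :: u, ⟨hu, hbu, b, .inl rfl⟩, ⟨[b], v, u, rfl, rfl, hbv, hbu, hvhat, huhat,
      by simp; omega, by simp; omega, by simpa [hb] using Col.flip_ne_G hC, hbis.of_succ⟩,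
      pH_matching_port_to_parent hbv hbu hf⟩
  · exact absurd (inHat_cons.mp hvhat).2 hw_hat

theorem ExtBisim.exists_adj_of_cons (hC : C ≠ Col.G) {t : ℕ} {p : Nd3} {pr v u : List Nd3}
    (hx : VH C d (p :: (pr ++ v))) (hy : VH C d (p :: (pr ++ u)))
    (hvhat : inHat C v) (huhat : inHat C u)
    (hlx : (p :: (pr ++ v)).length + (t + 1) < 2 * d)
    (hly : (p :: (pr ++ u)).length + (t + 1) < 2 * d)
    (hlast : ∀ a ∈ (p :: pr).getLast?, a.2.2 ≠ Col.G)
    (hbis : SVBisim (HhatGraph C d) (HhatGraph C d) fH fH (pHhat C d) (pHhat C d) t v u)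
    (w : List Nd3) (hw : (HGraph C d).Adj (p :: (pr ++ v)) w) :
    ∃ w', (HGraph C d).Adj (p :: (pr ++ u)) w' ∧ ExtBisim C d t w w' ∧
      ∃ a b c, pH C d w a = some (p :: (pr ++ v), b) ∧
        pH C d w' a = some (p :: (pr ++ u), c) := by
  obtain ⟨-, hwV, b, rfl | hxw⟩ := hw
  · have hbu : VH C d (b :: p :: (pr ++ u)) :=
      VH.cons_append_of_cons_append (pre := p :: pr) hC (List.cons_ne_nil _ _) hlast hy
        (by simp only [List.cons_append, List.length_cons] at hly ⊢; omega) hwV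
    refine ⟨_, ⟨hy, hbu, b, .inl rfl⟩, ⟨b :: p :: pr, v, u, rfl, rfl, hwV, hbu, hvhat, huhat,
      by simp only [List.length_cons] at hlx ⊢; omega,
      by simp only [List.length_cons] at hly ⊢; omega,
      by rwa [List.getLast?_cons_cons], hbis⟩, pH_matching_port_to_parent hwV hbu rfl⟩
  · obtain ⟨rfl, rfl⟩ := List.cons.inj hxw
    have hlast' : ∀ a ∈ pr.getLast?, a.2.2 ≠ Col.G := fun a ha =>
      hlast a (by rw [List.getLast?_cons, Option.mem_def.mp ha]; rfl)
    exact ⟨pr ++ u, ⟨hy, hy.of_cons, p, .inr rfl⟩, ⟨pr, v, u, rfl, rfl, hx.of_cons, hy.of_cons,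
      hvhat, huhat, by simp only [List.length_cons] at hlx; omega,
      by simp only [List.length_cons] at hly; omega, hlast', hbis⟩,
      pH_matching_port_to_child hx hy⟩

theorem ExtBisim.exists_adj (hC : C ≠ Col.G) {t : ℕ} {x y : List Nd3}
    (h : ExtBisim C d (t + 1) x y) (w : List Nd3) (hw : (HGraph C d).Adj x w) :
    ∃ w', (HGraph C d).Adj y w' ∧ ExtBisim C d t w w' ∧
      ∃ a b c, pH C d w a = some (x, b) ∧ pH C d w' a = some (y, c) := by
  obtain ⟨pre, v, u, rfl, rfl, hx, hy, hv, hu, hlx, hly, hlast, hbis⟩ := h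
  rcases pre with _ | ⟨p, pr⟩
  · exact ExtBisim.exists_adj_of_nil hC hx hy hv hu hlx hly hbis w hw
  · exact ExtBisim.exists_adj_of_cons hC hx hy hv hu hlx hly hlast hbis.of_succ w hw

theorem reachable_nil_HhatGraph {v : List Nd3} (hv : VH C d v) (hhat : inHat C v) :
    (HhatGraph C d).Reachable v [] := by
  induction v with
  | nil => rfl
  | cons a v ih =>
      have hv' := hv.of_cons
      have hhat' := (inHat_cons.mp hhat).2
      have hadj : (HhatGraph C d).Adj (a :: v) v := ⟨⟨hv, hv', a, .inr rfl⟩, hhat, hhat'⟩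
      exact hadj.reachable.trans (ih hv' hhat')

theorem length_le_dist_HhatGraph {v : List Nd3} (hv : VH C d v) (hhat : inHat C v) :
    v.length ≤ (HhatGraph C d).dist v [] := by
  obtain ⟨q, hq⟩ := (reachable_nil_HhatGraph hv hhat).exists_walk_length_eq_dist
  have hstep (x y : List Nd3) (h : (HhatGraph C d).Adj x y) : x.length ≤ y.length + 1 :=
    EH.length_le ((HGraph C d).adj_symm h.1)
  simpa [hq] using q.le_length_add List.length hstep

end Tree

theorem bisim_Hhat_to_H_general (C : Col) (hC : C ≠ Col.G) (d : ℕ)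
    (t : ℕ) (v u : List Nd3)
    (hv : VH C d v) (hu : VH C d u)
    (hvhat : inHat C v) (huhat : inHat C u)
    (hdist : (HhatGraph C d).dist v [] < 2 * d - t)
    (hdist' : (HhatGraph C d).dist u [] < 2 * d - t)
    (hbisim : SVBisim (HhatGraph C d) (HhatGraph C d) fH fH
      (pHhat C d) (pHhat C d) t v u) :
    SVBisim (HGraph C d) (HGraph C d) fH fH (pH C d) (pH C d) t v u := by
  have hlv := length_le_dist_HhatGraph hv hvhat
  have hlu := length_le_dist_HhatGraph hu huhat
  exact SVBisim.of_relation (ExtBisim C d) ExtBisim.symm (ExtBisim.deg_eq_and_fH_eq hC)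
    (ExtBisim.exists_adj hC)
    ⟨[], v, u, rfl, rfl, hv, hu, hvhat, huhat, by omega, by omega, by simp, hbisim⟩

/-- If two nodes of the subgraph `Ĥ_{C,d}`, each at distance `< 2d − t` from
the root, are `t`-SV-bisimilar in `(Ĥ_{C,d}, f_C, p_C)`, then the
corresponding nodes of `H_{C,d}` are `t`-SV-bisimilar in `(H_{C,d}, f_C, p_C)`. -/
theorem bisim_Hhat_to_H (C : Col) (hC : C ≠ Col.G) (d : ℕ) (hd : 2 ≤ d)
    (t : ℕ) (v u : List Nd3)
    (hv : VH C d v) (hu : VH C d u)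
    (hvhat : inHat C v) (huhat : inHat C u)
    (hdist : (HhatGraph C d).dist v [] < 2 * d - t)
    (hdist' : (HhatGraph C d).dist u [] < 2 * d - t)
    (hbisim : SVBisim (HhatGraph C d) (HhatGraph C d) fH fH
      (pHhat C d) (pHhat C d) t v u) :
    SVBisim (HGraph C d) (HGraph C d) fH fH (pH C d) (pH C d) t v u :=
  bisim_Hhat_to_H_general C hC d t v u hv hu hvhat huhat hdist hdist' hbisim

end Paper
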